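/- Under the stated assumptions on V, for every j ∈ ℤ and every r = 1, …, p the auxiliary variables satisfy the recursion iω Φ̂^{(r)}_j = (ṽ_{j−r+2} − ṽ_{j−r})/(2h) + (σ_j Φ̂^{(r)}_j + σ_{j−1} Φ̂^{(r)}_{j−1})/2 + Σ_{ℓ=1}^{r−1} (σ_{j−1−ℓ} Φ̂^{(r−ℓ)}_{j−1−ℓ} − σ_{j+1−ℓ} Φ̂^{(r−ℓ)}_{j+1−ℓ})/2. -/

import Mathlib

/-!
On the face with lower-left corner `(-s, k)` the two diagonals of the stretched grid are
`2h + iσ_k h/ω` and `iσ_k h/ω`, so the discrete Cauchy–Riemann equation expresses both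
`iω Φ̂^{(s)}_k` and `σ_k Φ̂^{(s)}_k` as difference quotients of `V` on that face. Substituting these,
the sum over `ℓ` becomes telescoping in the central differences
`(V_{ℓ-r, j+2-ℓ} - V_{ℓ-r, j-ℓ}) / 2h` of the columns `ℓ - r`, and what survives is the central
difference of `ṽ = V_{0,·}` together with the terms of the face `(-r, j)`.
-/

/-- The discrete complex stretching grid
`Z_{j,k} = (j+k)h + i(h/ω) Σ_{ℓ=0}^{k-1} σ_ℓ` (the sum being 0 for `k ≤ 0`). -/
noncomputable def Zmap (h ω : ℝ) (σ : ℤ → ℝ) (j k : ℤ) : ℂ :=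
  ((j + k : ℤ) : ℂ) * (h : ℂ) +
    Complex.I * ((h : ℂ) / (ω : ℂ)) * ∑ l ∈ Finset.range k.toNat, ((σ l : ℝ) : ℂ)

/-- Discrete holomorphicity with respect to the grid `Zmap h ω σ`: the discrete
Cauchy–Riemann equations hold on every face. -/
def DiscreteHolo (h ω : ℝ) (σ : ℤ → ℝ) (F : ℤ → ℤ → ℂ) : Prop :=
  ∀ j k : ℤ,
    (F (j + 1) (k + 1) - F j k) * (Zmap h ω σ j (k + 1) - Zmap h ω σ (j + 1) k) =
    (F j (k + 1) - F (j + 1) k) * (Zmap h ω σ (j + 1) (k + 1) - Zmap h ω σ j k)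

/-- The auxiliary variable `Φ̂^{(r)}_j = (V_{−r+1,j+1} − V_{−r,j}) / (iω(2h + iσ_j h/ω))`. -/
noncomputable def PhiAux (h ω : ℝ) (σ : ℤ → ℝ) (V : ℤ → ℤ → ℂ) (r j : ℤ) : ℂ :=
  (V (-r + 1) (j + 1) - V (-r) j) /
    (Complex.I * (ω : ℂ) * (2 * (h : ℂ) + Complex.I * (σ j : ℂ) * (h : ℂ) / (ω : ℂ)))

/-- The auxiliary variable `Ψ̂^{(r)}_j = (V_{r,j} − V_{r−1,j−1}) / (iω(2h + iσ_{j−1} h/ω))`. -/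
noncomputable def PsiAux (h ω : ℝ) (σ : ℤ → ℝ) (V : ℤ → ℤ → ℂ) (r j : ℤ) : ℂ :=
  (V r j - V (r - 1) (j - 1)) /
    (Complex.I * (ω : ℂ) * (2 * (h : ℂ) + Complex.I * (σ (j - 1) : ℂ) * (h : ℂ) / (ω : ℂ)))

open Finset

theorem Finset.sum_range_toNat_add_one {M : Type*} [AddCommMonoid M] (f : ℤ → M)
    (hf : ∀ k < 0, f k = 0) (k : ℤ) :
    ∑ l ∈ range (k + 1).toNat, f l = ∑ l ∈ range k.toNat, f l + f k := by
  rcases le_or_gt 0 k with hk | hk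
  · rw [show (k + 1).toNat = k.toNat + 1 by omega, sum_range_succ, Int.toNat_of_nonneg hk]
  · rw [Int.toNat_eq_zero.mpr hk.le, Int.toNat_eq_zero.mpr (by omega), hf k hk]
    simp

theorem Int.sum_Ico_sub_add_one {M : Type*} [AddCommGroup M] (g : ℤ → M) {a b : ℤ}
    (hab : a ≤ b) : ∑ l ∈ Ico a b, (g l - g (l + 1)) = g a - g b := by
  induction b, hab using Int.leInduction with
  | base => simp
  | succ b hab ih =>
    rw [← insert_Ico_right_eq_Ico_add_one hab, sum_insert (by simp), ih]
    abel

section Grid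

variable {h ω : ℝ} {σ : ℤ → ℝ}

theorem Zmap_add_one_add_one_sub (hσ : ∀ j < 0, σ j = 0) (j k : ℤ) :
    Zmap h ω σ (j + 1) (k + 1) - Zmap h ω σ j k
      = 2 * h + Complex.I * σ k * h / ω := by
  simp only [Zmap, sum_range_toNat_add_one (fun l => (σ l : ℂ)) (by simp_all)]
  push_cast
  ring

theorem Zmap_add_one_right_sub_add_one_left (hσ : ∀ j < 0, σ j = 0) (j k : ℤ) :
    Zmap h ω σ j (k + 1) - Zmap h ω σ (j + 1) k = Complex.I * σ k * h / ω := by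
  simp only [Zmap, sum_range_toNat_add_one (fun l => (σ l : ℂ)) (by simp_all)]
  push_cast
  ring

theorem DiscreteHolo.face_eq {V : ℤ → ℤ → ℂ} (hV : DiscreteHolo h ω σ V)
    (hσ : ∀ j < 0, σ j = 0) (j k : ℤ) :
    (V (j + 1) (k + 1) - V j k) * (Complex.I * σ k * h / ω) =
      (V j (k + 1) - V (j + 1) k) * (2 * h + Complex.I * σ k * h / ω) := by
  simpa only [Zmap_add_one_add_one_sub hσ, Zmap_add_one_right_sub_add_one_left hσ] using hV j k

theorem ofReal_mul_two_add_I_mul_ne_zero (hω : ω ≠ 0) (s : ℝ) :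
    (ω : ℂ) * 2 + Complex.I * s ≠ 0 := by
  intro hc
  have := congrArg Complex.re hc
  simp at this
  exact hω this

variable {V : ℤ → ℤ → ℂ} (hV : DiscreteHolo h ω σ V) (hσ : ∀ j < 0, σ j = 0)
  (hh : h ≠ 0) (hω : ω ≠ 0)
include hV hσ hh hω

theorem I_mul_mul_PhiAux (s k : ℤ) :
    Complex.I * ω * PhiAux h ω σ V s k =
      (V (-s + 1) (k + 1) + V (-s + 1) k - V (-s) (k + 1) - V (-s) k) / (2 * h) := by
  have hface := hV.face_eq hσ (-s) k
  have hd := ofReal_mul_two_add_I_mul_ne_zero hω (σ k)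
  have hωc : (ω : ℂ) ≠ 0 := Complex.ofReal_ne_zero.mpr hω
  have hhc : (h : ℂ) ≠ 0 := Complex.ofReal_ne_zero.mpr hh
  unfold PhiAux
  field_simp at hface ⊢
  linear_combination -hface

theorem sigma_mul_PhiAux (s k : ℤ) :
    σ k * PhiAux h ω σ V s k = (V (-s + 1) k - V (-s) (k + 1)) / h := by
  have hface := hV.face_eq hσ (-s) k
  have hd := ofReal_mul_two_add_I_mul_ne_zero hω (σ k)
  have hωc : (ω : ℂ) ≠ 0 := Complex.ofReal_ne_zero.mpr hω
  have hhc : (h : ℂ) ≠ 0 := Complex.ofReal_ne_zero.mpr hh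
  unfold PhiAux
  field_simp at hface ⊢
  linear_combination -Complex.I * hface + σ k * (V (-s + 1) (k + 1) - V (-s) k) * Complex.I_sq

end Grid

theorem stmt14_general
    (h : ℝ) (hh : 0 < h)
    (ω : ℝ) (hω : ω ≠ 0)
    (σ : ℤ → ℝ) (hσneg : ∀ j : ℤ, j < 0 → σ j = 0)
    (V : ℤ → ℤ → ℂ) (hholo : DiscreteHolo h ω σ V)
    (j : ℤ) (r : ℤ) (hr1 : 1 ≤ r) :
    Complex.I * (ω : ℂ) * PhiAux h ω σ V r j =
      (V 0 (j - r + 2) - V 0 (j - r)) / (2 * (h : ℂ)) +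
      ((σ j : ℂ) * PhiAux h ω σ V r j + (σ (j - 1) : ℂ) * PhiAux h ω σ V r (j - 1)) / 2 +
      ∑ l ∈ Finset.Icc (1 : ℤ) (r - 1),
        ((σ (j - 1 - l) : ℂ) * PhiAux h ω σ V (r - l) (j - 1 - l) -
          (σ (j + 1 - l) : ℂ) * PhiAux h ω σ V (r - l) (j + 1 - l)) / 2 := by
  have hσΦ := sigma_mul_PhiAux hholo hσneg hh.ne' hω
  set g : ℤ → ℂ := fun l => (V (l - r) (j + 2 - l) - V (l - r) (j - l)) / (2 * h)
  have htelescope : ∑ l ∈ Icc (1 : ℤ) (r - 1),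
      ((σ (j - 1 - l) : ℂ) * PhiAux h ω σ V (r - l) (j - 1 - l) -
        (σ (j + 1 - l) : ℂ) * PhiAux h ω σ V (r - l) (j + 1 - l)) / 2
      = ∑ l ∈ Ico (1 : ℤ) r, (g l - g (l + 1)) := by
    rw [Icc_sub_one_right_eq_Ico]
    refine sum_congr rfl fun l _ => ?_
    rw [hσΦ, hσΦ]
    simp only [g]
    ring_nf
  rw [htelescope, Int.sum_Ico_sub_add_one g hr1, I_mul_mul_PhiAux hholo hσneg hh.ne' hω,
    hσΦ, hσΦ]
  have hhc : (h : ℂ) ≠ 0 := Complex.ofReal_ne_zero.mpr hh.ne'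
  simp only [g]
  field_simp
  ring_nf

/-- the recursion for the auxiliary variables `Φ̂^{(r)}_j`,
where `ṽ_j = V_{0,j}`. -/
theorem stmt14
    (p : ℕ) (hp : 1 ≤ p) (h : ℝ) (hh : 0 < h)
    (a : ℤ → ℝ) (hsym : ∀ r : ℤ, a (-r) = a r)
    (ω : ℝ) (hω : ω ≠ 0)
    (σ : ℤ → ℝ) (hσ : ∀ j : ℤ, 0 ≤ σ j) (hσneg : ∀ j : ℤ, j < 0 → σ j = 0)
    (V : ℤ → ℤ → ℂ) (hholo : DiscreteHolo h ω σ V)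
    (heq : ∀ j k : ℤ, (∑ r ∈ Finset.Icc (-(p : ℤ)) (p : ℤ), (a r : ℂ) * V (j + r) k) +
        (ω : ℂ) ^ 2 * V j k = 0)
    (j : ℤ) (r : ℤ) (hr1 : 1 ≤ r) (hrp : r ≤ (p : ℤ)) :
    Complex.I * (ω : ℂ) * PhiAux h ω σ V r j =
      (V 0 (j - r + 2) - V 0 (j - r)) / (2 * (h : ℂ)) +
      ((σ j : ℂ) * PhiAux h ω σ V r j + (σ (j - 1) : ℂ) * PhiAux h ω σ V r (j - 1)) / 2 +
      ∑ l ∈ Finset.Icc (1 : ℤ) (r - 1),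
        ((σ (j - 1 - l) : ℂ) * PhiAux h ω σ V (r - l) (j - 1 - l) -
          (σ (j + 1 - l) : ℂ) * PhiAux h ω σ V (r - l) (j + 1 - l)) / 2 :=
  stmt14_general h hh ω hω σ hσneg V hholo j r hr1
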